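/- arXiv:1406.6601 — 4 statements merged into one kernel-verified Lean document; each statement's English description precedes it below -/
import Mathlib

section
/- Let Ω ⊆ ℝⁿ be closed convex, f convex and continuously differentiable, x ∈ Ω, x̂ ∈ Ω, α > 0, D symmetric positive definite, and y the minimizer over Ω of ∇f(x)ᵀ(z−x) + (1/(2α))(z−x)ᵀD⁻¹(z−x). Then (y−x)ᵀD⁻¹(x̂−x) ≥ α(f(x)−f(x̂)) + ‖y−x‖²_{D⁻¹} + α∇f(x)ᵀ(y−x). -/
/-!
Moving from `y` towards `x̂` along the segment cannot decrease the proximal objective, and the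
increment is a quadratic in the step length whose linear coefficient is
`⟪∇f(x), x̂ - y⟫ + ⟪y - x, D⁻¹(x̂ - y)⟫ / α`; so that coefficient is nonnegative. Adding this to
the gradient inequality `⟪∇f(x), x̂ - x⟫ ≤ f(x̂) - f(x)` of the convex function `f`, which
reduces to the one-variable slope inequality along the segment from `x` to `x̂`, gives the claim.
-/

open RealInnerProductSpace Matrix Set Filter Topology

lemma nonneg_of_forall_mul_add_sq_mul_nonneg {a b : ℝ}
    (h : ∀ t ∈ Ioc (0 : ℝ) 1, 0 ≤ t * a + t ^ 2 * b) : 0 ≤ a := by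
  have hlin : ∀ t ∈ Ioc (0 : ℝ) 1, 0 ≤ a + t * b := fun t ht =>
    nonneg_of_mul_nonneg_right (by linear_combination h t ht) ht.1
  have hlim : Tendsto (fun t : ℝ => a + t * b) (𝓝[>] 0) (𝓝 a) :=
    ((by fun_prop : Continuous fun t : ℝ => a + t * b).tendsto' 0 a (by simp)).mono_left
      nhdsWithin_le_nhds
  exact ge_of_tendsto hlim (mem_of_superset (Ioc_mem_nhdsGT zero_lt_one) hlin)

section

variable {E : Type*} [NormedAddCommGroup E] [NormedSpace ℝ E]

lemma ConvexOn.hasFDerivAt_apply_sub_le {s : Set E} {f : E → ℝ} {f' : E →L[ℝ] ℝ} {x y : E}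
    (hf : ConvexOn ℝ s f) (hx : x ∈ s) (hy : y ∈ s) (hf' : HasFDerivAt f f' x) :
    f' (y - x) ≤ f y - f x := by
  have hseg : Icc (0 : ℝ) 1 ⊆ AffineMap.lineMap x y ⁻¹' s := by
    rw [← image_subset_iff, ← segment_eq_image_lineMap]
    exact hf.1.segment_subset hx hy
  have hφ : ConvexOn ℝ (Icc 0 1) (f ∘ AffineMap.lineMap (k := ℝ) x y) :=
    (hf.comp_affineMap _).subset hseg (convex_Icc 0 1)
  have hφ' : HasDerivAt (f ∘ AffineMap.lineMap (k := ℝ) x y) (f' (y - x)) 0 := by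
    have : HasFDerivAt f f' (AffineMap.lineMap x y (0 : ℝ)) := by simpa using hf'
    exact this.comp_hasDerivAt 0 AffineMap.hasDerivAt_lineMap
  simpa [slope_def_field] using hφ.le_slope_of_hasDerivAt (left_mem_Icc.2 zero_le_one)
    (right_mem_Icc.2 zero_le_one) zero_lt_one hφ'

end

section

variable {F : Type*} [NormedAddCommGroup F] [InnerProductSpace ℝ F]

noncomputable def proxObjective (g : F) (B : F →ₗ[ℝ] F) (α : ℝ) (x z : F) : ℝ :=
  ⟪g, z - x⟫ + 1 / (2 * α) * ⟪z - x, B (z - x)⟫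

lemma proxObjective_add_smul_sub {g : F} {B : F →ₗ[ℝ] F} (hB : B.IsSymmetric) (α : ℝ)
    (x y w : F) (t : ℝ) :
    proxObjective g B α x (y + t • w) - proxObjective g B α x y =
      t * (⟪g, w⟫ + ⟪y - x, B w⟫ / α) + t ^ 2 * (⟪w, B w⟫ / (2 * α)) := by
  have hsymm : ⟪w, B (y - x)⟫ = ⟪y - x, B w⟫ := by rw [← hB, real_inner_comm]
  simp only [proxObjective, add_sub_right_comm y, inner_add_left, inner_add_right, map_add,
    map_smul, real_inner_smul_left, real_inner_smul_right, hsymm]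
  ring

lemma IsMinOn.proxObjective_optimality {g : F} {B : F →ₗ[ℝ] F} (hB : B.IsSymmetric)
    {α : ℝ} (hα : 0 < α) {Ω : Set F} (hΩ : Convex ℝ Ω) {x y : F}
    (hmin : IsMinOn (proxObjective g B α x) Ω y) (hy : y ∈ Ω) {z : F} (hz : z ∈ Ω) :
    0 ≤ α * ⟪g, z - y⟫ + ⟪y - x, B (z - y)⟫ := by
  have h : 0 ≤ ⟪g, z - y⟫ + ⟪y - x, B (z - y)⟫ / α := by
    refine nonneg_of_forall_mul_add_sq_mul_nonneg (b := ⟪z - y, B (z - y)⟫ / (2 * α))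
      fun t ht => ?_
    rw [← proxObjective_add_smul_sub hB, sub_nonneg]
    exact hmin (hΩ.add_smul_sub_mem hy hz (Ioc_subset_Icc_self ht))
  calc 0 ≤ α * (⟪g, z - y⟫ + ⟪y - x, B (z - y)⟫ / α) := mul_nonneg hα.le h
    _ = α * ⟪g, z - y⟫ + ⟪y - x, B (z - y)⟫ := by field_simp

lemma ConvexOn.inner_gradient_sub_le [CompleteSpace F] {s : Set F} {f : F → ℝ} {x y : F}
    (hf : ConvexOn ℝ s f) (hx : x ∈ s) (hy : y ∈ s) (hd : DifferentiableAt ℝ f x) :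
    ⟪gradient f x, y - x⟫ ≤ f y - f x := by
  simpa using hf.hasFDerivAt_apply_sub_le hx hy hd.hasGradientAt

end

theorem stmt11_general {n : ℕ} (Ω : Set (EuclideanSpace ℝ (Fin n)))
    (hΩconv : Convex ℝ Ω)
    (f : EuclideanSpace ℝ (Fin n) → ℝ) (hf : ContDiff ℝ 1 f)
    (hconv : ConvexOn ℝ Ω f)
    (x : EuclideanSpace ℝ (Fin n)) (hx : x ∈ Ω)
    (xhat : EuclideanSpace ℝ (Fin n)) (hxhat : xhat ∈ Ω)
    (α : ℝ) (hα : 0 < α)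
    (D : Matrix (Fin n) (Fin n) ℝ) (hD : D.IsHermitian)
    (y : EuclideanSpace ℝ (Fin n)) (hy : y ∈ Ω)
    (hmin : ∀ z ∈ Ω,
      ⟪gradient f x, y - x⟫ + 1 / (2 * α) * ⟪y - x, toEuclideanLin D⁻¹ (y - x)⟫ ≤
        ⟪gradient f x, z - x⟫ + 1 / (2 * α) * ⟪z - x, toEuclideanLin D⁻¹ (z - x)⟫) :
    α * (f x - f xhat) + ⟪y - x, toEuclideanLin D⁻¹ (y - x)⟫
        + α * ⟪gradient f x, y - x⟫ ≤
      ⟪y - x, toEuclideanLin D⁻¹ (xhat - x)⟫ := by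
  have hB : (toEuclideanLin D⁻¹).IsSymmetric := isSymmetric_toEuclideanLin_iff.2 hD.inv
  have hopt := IsMinOn.proxObjective_optimality hB hα hΩconv (isMinOn_iff.2 hmin) hy hxhat
  have hgrad := hconv.inner_gradient_sub_le hx hxhat (hf.differentiable one_ne_zero x)
  have hsplit : xhat - x = (y - x) + (xhat - y) := by abel
  rw [hsplit, inner_add_right] at hgrad
  rw [hsplit, map_add, inner_add_right]
  linear_combination hopt + α * hgrad

theorem stmt11 {n : ℕ} (Ω : Set (EuclideanSpace ℝ (Fin n)))
    (hΩc : IsClosed Ω) (hΩconv : Convex ℝ Ω)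
    (f : EuclideanSpace ℝ (Fin n) → ℝ) (hf : ContDiff ℝ 1 f)
    (hconv : ConvexOn ℝ Ω f)
    (x : EuclideanSpace ℝ (Fin n)) (hx : x ∈ Ω)
    (xhat : EuclideanSpace ℝ (Fin n)) (hxhat : xhat ∈ Ω)
    (α : ℝ) (hα : 0 < α)
    (D : Matrix (Fin n) (Fin n) ℝ) (hD : D.IsHermitian) (hPD : D.PosDef)
    (y : EuclideanSpace ℝ (Fin n)) (hy : y ∈ Ω)
    (hmin : ∀ z ∈ Ω,
      ⟪gradient f x, y - x⟫ + 1 / (2 * α) * ⟪y - x, toEuclideanLin D⁻¹ (y - x)⟫ ≤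
        ⟪gradient f x, z - x⟫ + 1 / (2 * α) * ⟪z - x, toEuclideanLin D⁻¹ (z - x)⟫) :
    α * (f x - f xhat) + ⟪y - x, toEuclideanLin D⁻¹ (y - x)⟫
        + α * ⟪gradient f x, y - x⟫ ≤
      ⟪y - x, toEuclideanLin D⁻¹ (xhat - x)⟫ :=
  stmt11_general Ω hΩconv f hf hconv x hx xhat hxhat α hα D hD y hy hmin
end

section
/- In the setting above with x⁺ = x + λ(y−x), λ ∈ (0,1], and x̂ a minimizer of f over Ω, one has ‖x⁺ − x̂‖²_{D⁻¹} ≤ ‖x − x̂‖²_{D⁻¹} − 2αλ∇f(x)ᵀ(y−x) − 2λα(f(x) − f(x̂)). -/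
/-! Minimality of `y` for the quadratic model, tested along the segment from `y` towards `x̂`
inside `Ω`, gives the variational inequality `⟪∇f(x), x̂ - y⟫ + α⁻¹ ⟪y - x, D⁻¹ (x̂ - y)⟫ ≥ 0`,
and convexity of `f` gives `⟪∇f(x), x̂ - x⟫ ≤ f(x̂) - f(x)`. Expanding the `D⁻¹`-norm of
`x⁺ - x̂ = (x - x̂) + λ (y - x)`, the cross term is controlled by these two inequalities, and what
is left is `-λ (2 - λ) ‖y - x‖²_{D⁻¹} ≤ 0`. -/

open RealInnerProductSpace Matrix

open Set Filter Topology in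
theorem nonneg_of_forall_Ioc_nonneg_add_mul {a b : ℝ} (h : ∀ t ∈ Ioc (0 : ℝ) 1, 0 ≤ a + t * b) :
    0 ≤ a := by
  have hcont : Continuous fun t : ℝ => a + t * b := by fun_prop
  refine ge_of_tendsto
    ((hcont.tendsto' 0 a (by simp)).mono_left (nhdsWithin_le_nhds (s := Ioi 0))) ?_
  filter_upwards [Ioc_mem_nhdsGT (zero_lt_one' ℝ)] with t ht using h t ht

open AffineMap in
theorem ConvexOn.fderiv_sub_le_sub {E : Type*} [NormedAddCommGroup E] [NormedSpace ℝ E]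
    {s : Set E} {f : E → ℝ} {f' : E →L[ℝ] ℝ} {x z : E}
    (hf : ConvexOn ℝ s f) (hx : x ∈ s) (hz : z ∈ s) (hf' : HasFDerivAt f f' x) :
    f' (z - x) ≤ f z - f x := by
  let l : ℝ →ᵃ[ℝ] E := lineMap x z
  have hline : ConvexOn ℝ (l ⁻¹' s) (f ∘ l) := hf.comp_affineMap l
  have hderiv : HasDerivAt (f ∘ l) (f' (z - x)) 0 :=
    (by simpa [l] using hf' : HasFDerivAt f f' (l 0)).comp_hasDerivAt 0 hasDerivAt_lineMap
  simpa [l, slope_def_field] using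
    hline.le_slope_of_hasDerivAt (x := 0) (y := 1) (by simpa [l] using hx) (by simpa [l] using hz)
      one_pos hderiv

theorem ConvexOn.inner_gradient_le_sub {E : Type*} [NormedAddCommGroup E] [InnerProductSpace ℝ E]
    [CompleteSpace E] {s : Set E} {f : E → ℝ} {g x z : E}
    (hf : ConvexOn ℝ s f) (hx : x ∈ s) (hz : z ∈ s) (hg : HasGradientAt f g x) :
    ⟪g, z - x⟫ ≤ f z - f x := by
  simpa using hf.fderiv_sub_le_sub hx hz (hasGradientAt_iff_hasFDerivAt.mp hg)

section QuadraticModel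

variable {E : Type*} [NormedAddCommGroup E] [InnerProductSpace ℝ E] {T : E →ₗ[ℝ] E}

theorem LinearMap.IsSymmetric.inner_add_smul_map_add_smul (hT : T.IsSymmetric) (u v : E) (t : ℝ) :
    ⟪u + t • v, T (u + t • v)⟫ = ⟪u, T u⟫ + 2 * t * ⟪u, T v⟫ + t ^ 2 * ⟪v, T v⟫ := by
  simp only [map_add, map_smul, inner_add_left, inner_add_right, real_inner_smul_left,
    real_inner_smul_right, hT v u, real_inner_comm (T v) u]
  ring

theorem IsMinOn.inner_add_two_mul_inner_map_nonneg {s : Set E} (hs : Convex ℝ s)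
    (hT : T.IsSymmetric) {g x y z : E} {c : ℝ}
    (hmin : IsMinOn (fun w => ⟪g, w - x⟫ + c * ⟪w - x, T (w - x)⟫) s y) (hy : y ∈ s) (hz : z ∈ s) :
    0 ≤ ⟪g, z - y⟫ + 2 * c * ⟪y - x, T (z - y)⟫ := by
  refine nonneg_of_forall_Ioc_nonneg_add_mul (b := c * ⟪z - y, T (z - y)⟫) fun t ht => ?_
  have hle := isMinOn_iff.mp hmin _ (hs.add_smul_sub_mem hy hz ⟨ht.1.le, ht.2⟩)
  rw [show y + t • (z - y) - x = (y - x) + t • (z - y) by abel,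
    hT.inner_add_smul_map_add_smul, inner_add_right, real_inner_smul_right] at hle
  have : 0 ≤ t * (⟪g, z - y⟫ + 2 * c * ⟪y - x, T (z - y)⟫ + t * (c * ⟪z - y, T (z - y)⟫)) := by
    linear_combination hle
  exact nonneg_of_mul_nonneg_right this ht.1

theorem LinearMap.IsPositive.inner_map_relaxation_le (hT : T.IsPositive) {g x y z : E}
    {α lam a b : ℝ} (hα : 0 < α) (hlam₀ : 0 ≤ lam) (hlam₁ : lam ≤ 1)
    (hopt : 0 ≤ ⟪g, z - y⟫ + 2 * (1 / (2 * α)) * ⟪y - x, T (z - y)⟫)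
    (hgrad : ⟪g, z - x⟫ ≤ b - a) :
    ⟪x + lam • (y - x) - z, T (x + lam • (y - x) - z)⟫ ≤
      ⟪x - z, T (x - z)⟫ - 2 * α * lam * ⟪g, y - x⟫ - 2 * lam * α * (a - b) := by
  set u := y - x
  set e := z - y
  have hsplit : ⟪g, e⟫ = ⟪g, z - x⟫ - ⟪g, u⟫ := by
    rw [← inner_sub_right]; congr 1; simp only [u, e]; abel
  have hopt' : 0 ≤ α * (⟪g, z - x⟫ - ⟪g, u⟫) + ⟪u, T e⟫ := by
    have := mul_nonneg hα.le hopt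
    field_simp at this
    rwa [hsplit] at this
  have hcross : ⟪x - z, T u⟫ = -⟪u, T u⟫ - ⟪u, T e⟫ := by
    rw [show x - z = -u - e by simp only [u, e]; abel, inner_sub_left, inner_neg_left,
      ← hT.isSymmetric e u, real_inner_comm (T e) u]
  have hQ : 0 ≤ lam * (2 - lam) * ⟪u, T u⟫ :=
    mul_nonneg (mul_nonneg hlam₀ (by linarith)) (hT.inner_nonneg_right u)
  rw [show x + lam • u - z = (x - z) + lam • u by abel,
    hT.isSymmetric.inner_add_smul_map_add_smul, hcross]
  nlinarith [mul_nonneg hlam₀ hopt', mul_le_mul_of_nonneg_left hgrad (mul_nonneg hα.le hlam₀)]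

end QuadraticModel

theorem stmt12_general {n : ℕ} (Ω : Set (EuclideanSpace ℝ (Fin n)))
    (hΩconv : Convex ℝ Ω)
    (f : EuclideanSpace ℝ (Fin n) → ℝ) (hf : ContDiff ℝ 1 f)
    (hconv : ConvexOn ℝ Ω f)
    (x : EuclideanSpace ℝ (Fin n)) (hx : x ∈ Ω)
    (xhat : EuclideanSpace ℝ (Fin n)) (hxhat : xhat ∈ Ω)
    (α : ℝ) (hα : 0 < α)
    (D : Matrix (Fin n) (Fin n) ℝ) (hPD : D.PosDef)
    (y : EuclideanSpace ℝ (Fin n)) (hy : y ∈ Ω)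
    (hmin : ∀ z ∈ Ω,
      ⟪gradient f x, y - x⟫ + 1 / (2 * α) * ⟪y - x, toEuclideanLin D⁻¹ (y - x)⟫ ≤
        ⟪gradient f x, z - x⟫ + 1 / (2 * α) * ⟪z - x, toEuclideanLin D⁻¹ (z - x)⟫)
    (lam : ℝ) (hlam : lam ∈ Set.Ioc (0 : ℝ) 1) :
    ⟪x + lam • (y - x) - xhat, toEuclideanLin D⁻¹ (x + lam • (y - x) - xhat)⟫ ≤
      ⟪x - xhat, toEuclideanLin D⁻¹ (x - xhat)⟫
        - 2 * α * lam * ⟪gradient f x, y - x⟫ - 2 * lam * α * (f x - f xhat) := by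
  have hT : (toEuclideanLin D⁻¹).IsPositive :=
    Matrix.isPositive_toEuclideanLin_iff.mpr hPD.posSemidef.inv
  have hopt := (isMinOn_iff.mpr hmin).inner_add_two_mul_inner_map_nonneg hΩconv hT.isSymmetric
    hy hxhat
  have hgrad := hconv.inner_gradient_le_sub hx hxhat (hf.differentiable one_ne_zero x).hasGradientAt
  exact hT.inner_map_relaxation_le hα hlam.1.le hlam.2 hopt hgrad

theorem stmt12 {n : ℕ} (Ω : Set (EuclideanSpace ℝ (Fin n)))
    (hΩc : IsClosed Ω) (hΩconv : Convex ℝ Ω)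
    (f : EuclideanSpace ℝ (Fin n) → ℝ) (hf : ContDiff ℝ 1 f)
    (hconv : ConvexOn ℝ Ω f)
    (x : EuclideanSpace ℝ (Fin n)) (hx : x ∈ Ω)
    (xhat : EuclideanSpace ℝ (Fin n)) (hxhat : xhat ∈ Ω)
    (hminf : ∀ z ∈ Ω, f xhat ≤ f z)
    (α : ℝ) (hα : 0 < α)
    (D : Matrix (Fin n) (Fin n) ℝ) (hD : D.IsHermitian) (hPD : D.PosDef)
    (y : EuclideanSpace ℝ (Fin n)) (hy : y ∈ Ω)
    (hmin : ∀ z ∈ Ω,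
      ⟪gradient f x, y - x⟫ + 1 / (2 * α) * ⟪y - x, toEuclideanLin D⁻¹ (y - x)⟫ ≤
        ⟪gradient f x, z - x⟫ + 1 / (2 * α) * ⟪z - x, toEuclideanLin D⁻¹ (z - x)⟫)
    (lam : ℝ) (hlam : lam ∈ Set.Ioc (0 : ℝ) 1) :
    ⟪x + lam • (y - x) - xhat, toEuclideanLin D⁻¹ (x + lam • (y - x) - xhat)⟫ ≤
      ⟪x - xhat, toEuclideanLin D⁻¹ (x - xhat)⟫
        - 2 * α * lam * ⟪gradient f x, y - x⟫ - 2 * lam * α * (f x - f xhat) :=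
  stmt12_general Ω hΩconv f hf hconv x hx xhat hxhat α hα D hPD y hy hmin lam hlam
end

section
/- Let {a_k} be a nonnegative sequence with a_{k+1} ≤ μ_k² a_k + c_k where μ_k ≥ 1, ∏ μ_j² bounded by M, c_k ≥ 0, ∑ c_k < ∞. If {a_k} has a subsequence converging to 0, then a_k → 0. -/
/-!
Dividing by the partial products `P k = ∏_{j<k} μ_j²` turns the recursion into
`a_{k+1}/P_{k+1} ≤ a_k/P_k + c_k`, so `a_k ≤ M (a_m + ∑_{m ≤ j < k} c_j)` whenever `m ≤ k`.
Along the subsequence both `a_m` and the tail of `∑ c` become small, and the bound then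
controls every later term.
-/

open Filter Topology Finset

lemma tendsto_zero_of_le_of_forall_exists_lt {a b : ℕ → ℝ} (ha : ∀ k, 0 ≤ a k)
    (hab : ∀ m k, m ≤ k → a k ≤ b m) (hb : ∀ ε > 0, ∃ m, b m < ε) :
    Tendsto a atTop (𝓝 0) := by
  rw [Metric.tendsto_atTop]
  intro ε hε
  obtain ⟨m, hm⟩ := hb ε hε
  refine ⟨m, fun k hk => ?_⟩
  rw [Real.dist_eq, sub_zero, abs_of_nonneg (ha k)]
  exact (hab m k hk).trans_lt hm

lemma sum_Ico_le_tsum_nat_add {c : ℕ → ℝ} (hc : ∀ k, 0 ≤ c k) (hcsum : Summable c) (m k : ℕ) :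
    ∑ j ∈ Ico m k, c j ≤ ∑' l, c (l + m) := by
  rw [sum_Ico_eq_sum_range]
  simp_rw [add_comm m]
  exact ((summable_nat_add_iff m).2 hcsum).sum_le_tsum _ fun l _ => hc (l + m)

section QuasiFejer

variable {a w c : ℕ → ℝ} (hw : ∀ k, 1 ≤ w k) (hc : ∀ k, 0 ≤ c k)
  (hrec : ∀ k, a (k + 1) ≤ w k * a k + c k)
include hw hc hrec

lemma div_prod_le_div_prod_add_sum {m k : ℕ} (hmk : m ≤ k) :
    a k / ∏ j ∈ range k, w j ≤ a m / ∏ j ∈ range m, w j + ∑ j ∈ Ico m k, c j := by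
  induction k, hmk using Nat.le_induction with
  | base => simp
  | succ k hmk ih =>
    have hP : 1 ≤ ∏ j ∈ range k, w j := one_le_prod fun j _ => hw j
    have hPw : 1 ≤ (∏ j ∈ range k, w j) * w k := one_le_mul_of_one_le_of_one_le hP (hw k)
    have hw₀ : w k ≠ 0 := (zero_lt_one.trans_le (hw k)).ne'
    have hP₀ : ∏ j ∈ range k, w j ≠ 0 := (zero_lt_one.trans_le hP).ne'
    rw [prod_range_succ, sum_Ico_succ_top hmk]
    calc a (k + 1) / ((∏ j ∈ range k, w j) * w k)
        ≤ (w k * a k + c k) / ((∏ j ∈ range k, w j) * w k) := by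
          gcongr
          exact hrec k
      _ = a k / ∏ j ∈ range k, w j + c k / ((∏ j ∈ range k, w j) * w k) := by
          field_simp
      _ ≤ a m / ∏ j ∈ range m, w j + ∑ j ∈ Ico m k, c j + c k := by
          gcongr
          exact div_le_self (hc k) hPw
      _ = _ := by ring

lemma le_mul_add_sum_Ico (ha : ∀ k, 0 ≤ a k) {M : ℝ} (hM : ∀ k, ∏ j ∈ range k, w j ≤ M)
    {m k : ℕ} (hmk : m ≤ k) :
    a k ≤ M * (a m + ∑ j ∈ Ico m k, c j) := by
  have hP : ∀ n, 1 ≤ ∏ j ∈ range n, w j := fun n => one_le_prod fun j _ => hw j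
  have hP₀ : ∏ j ∈ range k, w j ≠ 0 := (zero_lt_one.trans_le (hP k)).ne'
  have hM₀ : 0 ≤ M := zero_le_one.trans ((hP 0).trans (hM 0))
  calc a k = (∏ j ∈ range k, w j) * (a k / ∏ j ∈ range k, w j) := by field_simp
    _ ≤ M * (a m / ∏ j ∈ range m, w j + ∑ j ∈ Ico m k, c j) := by
        gcongr
        · exact div_nonneg (ha k) (zero_le_one.trans (hP k))
        · exact hM k
        · exact div_prod_le_div_prod_add_sum hw hc hrec hmk
    _ ≤ M * (a m + ∑ j ∈ Ico m k, c j) := by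
        gcongr
        exact div_le_self (ha m) (hP m)

theorem tendsto_zero_of_quasiFejer (ha : ∀ k, 0 ≤ a k) {M : ℝ}
    (hM : ∀ k, ∏ j ∈ range k, w j ≤ M) (hcsum : Summable c) {φ : ℕ → ℕ}
    (hφ : Tendsto φ atTop atTop) (hsub : Tendsto (a ∘ φ) atTop (𝓝 0)) :
    Tendsto a atTop (𝓝 0) := by
  set T : ℕ → ℝ := fun m => ∑' l, c (l + m)
  have hT : Tendsto (T ∘ φ) atTop (𝓝 0) := (tendsto_sum_nat_add c).comp hφ
  have hbound : Tendsto (fun i => M * (a (φ i) + T (φ i))) atTop (𝓝 0) := by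
    simpa using (hsub.add hT).const_mul M
  refine tendsto_zero_of_le_of_forall_exists_lt ha (b := fun m => M * (a m + T m))
    (fun m k hmk => ?_) (fun ε hε => ?_)
  · have hM₀ : 0 ≤ M := zero_le_one.trans ((one_le_prod fun j _ => hw j).trans (hM 0))
    calc a k ≤ M * (a m + ∑ j ∈ Ico m k, c j) := le_mul_add_sum_Ico hw hc hrec ha hM hmk
      _ ≤ M * (a m + T m) := by gcongr; exact sum_Ico_le_tsum_nat_add hc hcsum m k
  · obtain ⟨i, hi⟩ := (hbound.eventually (gt_mem_nhds hε)).exists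
    exact ⟨φ i, hi⟩

end QuasiFejer

theorem stmt15 (a μ c : ℕ → ℝ) (M : ℝ)
    (ha : ∀ k, 0 ≤ a k) (hμ : ∀ k, 1 ≤ μ k)
    (hprod : ∀ k, ∏ j ∈ Finset.range (k + 1), μ j ^ 2 ≤ M)
    (hc : ∀ k, 0 ≤ c k) (hcsum : Summable c)
    (hrec : ∀ k, a (k + 1) ≤ μ k ^ 2 * a k + c k)
    (φ : ℕ → ℕ) (hφ : StrictMono φ)
    (hsub : Tendsto (a ∘ φ) atTop (nhds 0)) :
    Tendsto a atTop (nhds 0) := by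
  have hw : ∀ k, 1 ≤ μ k ^ 2 := fun k => one_le_pow₀ (hμ k)
  have hM : ∀ k, ∏ j ∈ range k, μ j ^ 2 ≤ M
    | 0 => by simpa using (hw 0).trans (by simpa using hprod 0)
    | k + 1 => hprod k
  exact tendsto_zero_of_quasiFejer hw hc hrec ha hM hcsum hφ.tendsto_atTop hsub
end

section
/- Let f : Ω → ℝ be convex with minimizer x̂ and minimum f*. Suppose a sequence {x^{(k)}} ⊆ Ω satisfies, for constants M ≥ 1, a > 0, C ≥ 0 and all k: ‖x^{(k+1)} − x̂‖² ≤ M‖x^{(0)} − x̂‖² + C + a((k+1)f* − ∑_{j=0}^k f(x^{(j)})), and f(x^{(k+1)}) ≤ f(x^{(k)}). Then f(x^{(k+1)}) − f* ≤ (M‖x^{(0)} − x̂‖² + C + a(f(x^{(0)}) − f*))/(a k) for all k ≥ 1; i.e., f(x^{(k)}) − f* = O(1/k). -/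
/-! Since the values `f (x j)` decrease, `∑_{j ≤ k} f (x j) ≥ k f (x (k+1)) + f (x 0)`. Hence the
nonnegative quantity `‖x (k+1) - xhat‖²` is at most
`M ‖x 0 - xhat‖² + C - a k (f (x (k+1)) - f*) - a (f (x 0) - f*)`, and `f (x 0) ≥ f*`. -/

open Finset

theorem Antitone.nsmul_le_sum_range {M : Type*} [AddCommMonoid M] [PartialOrder M]
    [IsOrderedAddMonoid M] {u : ℕ → M} (hu : Antitone u) (n : ℕ) :
    n • u n ≤ ∑ j ∈ range n, u j := by
  simpa using card_nsmul_le_sum (range n) u (u n) fun j hj => hu (mem_range.1 hj).le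

theorem Antitone.sub_le_div_of_regret_le {u : ℕ → ℝ} (hu : Antitone u) {m a D : ℝ}
    (hm : m ≤ u 0) (ha : 0 < a) {k : ℕ} (hk : 1 ≤ k)
    (hregret : a * (∑ j ∈ range (k + 1), u j - (k + 1) * m) ≤ D) :
    u (k + 1) - m ≤ (D + a * (u 0 - m)) / (a * k) := by
  have hshift : Antitone fun j => u (j + 1) := hu.comp_monotone fun _ _ h => Nat.succ_le_succ h
  have hsum : k * u (k + 1) + u 0 ≤ ∑ j ∈ range (k + 1), u j := by
    rw [sum_range_succ']
    simpa [nsmul_eq_mul] using hshift.nsmul_le_sum_range k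
  have hk' : (0 : ℝ) < k := by exact_mod_cast hk
  rw [le_div_iff₀ (by positivity)]
  linarith [mul_le_mul_of_nonneg_left hsum ha.le, mul_nonneg ha.le (sub_nonneg.2 hm)]

theorem stmt16_general {n : ℕ} (Ω : Set (EuclideanSpace ℝ (Fin n)))
    (f : EuclideanSpace ℝ (Fin n) → ℝ)
    (xhat : EuclideanSpace ℝ (Fin n))
    (hminf : ∀ z ∈ Ω, f xhat ≤ f z)
    (x : ℕ → EuclideanSpace ℝ (Fin n)) (hx : ∀ k, x k ∈ Ω)
    (M a C : ℝ) (ha : 0 < a)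
    (hineq : ∀ k, ‖x (k + 1) - xhat‖ ^ 2 ≤
      M * ‖x 0 - xhat‖ ^ 2 + C +
        a * ((k + 1 : ℝ) * f xhat - ∑ j ∈ Finset.range (k + 1), f (x j)))
    (hmono : ∀ k, f (x (k + 1)) ≤ f (x k)) :
    ∀ k : ℕ, 1 ≤ k →
      f (x (k + 1)) - f xhat ≤
        (M * ‖x 0 - xhat‖ ^ 2 + C + a * (f (x 0) - f xhat)) / (a * k) := by
  intro k hk
  have hanti : Antitone fun j => f (x j) := antitone_nat_of_succ_le hmono
  refine hanti.sub_le_div_of_regret_le (hminf _ (hx 0)) ha hk ?_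
  linarith [hineq k, sq_nonneg ‖x (k + 1) - xhat‖]

theorem stmt16 {n : ℕ} (Ω : Set (EuclideanSpace ℝ (Fin n)))
    (f : EuclideanSpace ℝ (Fin n) → ℝ) (hconv : ConvexOn ℝ Ω f)
    (xhat : EuclideanSpace ℝ (Fin n)) (hxhat : xhat ∈ Ω)
    (hminf : ∀ z ∈ Ω, f xhat ≤ f z)
    (x : ℕ → EuclideanSpace ℝ (Fin n)) (hx : ∀ k, x k ∈ Ω)
    (M a C : ℝ) (hM : 1 ≤ M) (ha : 0 < a) (hC : 0 ≤ C)
    (hineq : ∀ k, ‖x (k + 1) - xhat‖ ^ 2 ≤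
      M * ‖x 0 - xhat‖ ^ 2 + C +
        a * ((k + 1 : ℝ) * f xhat - ∑ j ∈ Finset.range (k + 1), f (x j)))
    (hmono : ∀ k, f (x (k + 1)) ≤ f (x k)) :
    ∀ k : ℕ, 1 ≤ k →
      f (x (k + 1)) - f xhat ≤
        (M * ‖x 0 - xhat‖ ^ 2 + C + a * (f (x 0) - f xhat)) / (a * k) :=
  stmt16_general Ω f xhat hminf x hx M a C ha hineq hmono
end
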